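/- arXiv:1612.03830 — 6 statements merged into one kernel-verified Lean document; each statement's English description precedes it below -/
import Mathlib

section
/- Let R be a commutative ring of prime characteristic p, let M be an R-module, and let κ : M → M be an additive map satisfying κ(r^p m) = r κ(m) for all r ∈ R and m ∈ M (a Cartier structure). Let I ⊆ R be an ideal and let m ∈ M satisfy I^k m = 0 for some k ≥ 1. Then for every e with p^e ≥ k, the submodule κ^e(R·m) is annihilated by I, i.e. I · κ^e(r m) = 0 for all r ∈ R. -/
/-- Let `R` be a commutative ring of prime characteristic `p`, `M` an
`R`-module and `κ : M → M` an additive map satisfying `κ (r^p • m) = r • κ m` (a Cartier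
structure).  If `I` is an ideal, `m ∈ M` satisfies `I^k • m = 0` for some `k ≥ 1`, then for
every `e` with `p^e ≥ k` the submodule `κ^e (R • m)` is annihilated by `I`. -/
theorem cartier_iterate_annihilated
    {R M : Type*} [CommRing R] [AddCommGroup M] [Module R M]
    (p : ℕ) [Fact p.Prime] [CharP R p]
    (κ : M →+ M) (hκ : ∀ (r : R) (m : M), κ (r ^ p • m) = r • κ m)
    (I : Ideal R) (m : M) (k : ℕ) (hk : 1 ≤ k)
    (hkill : ∀ a ∈ I ^ k, a • m = 0)
    (e : ℕ) (he : k ≤ p ^ e) :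
    ∀ r : R, ∀ a ∈ I, a • (κ^[e] (r • m)) = 0 := by
  have key : ∀ (n : ℕ) (s : R) (x : M), κ^[n] (s ^ (p ^ n) • x) = s • κ^[n] x := by
    intro n
    induction n with
    | zero => simp
    | succ n ih =>
      intro s x
      rw [Function.iterate_succ_apply, pow_succ, pow_mul, hκ (s ^ p ^ n), ih, ← Function.iterate_succ_apply,
        Function.iterate_succ_apply']
  intro r a ha
  rw [← key e a (r • m), smul_comm, hkill (a ^ p ^ e) ?_, smul_zero,
    Function.iterate_fixed (map_zero κ) e]
  · exact Ideal.pow_le_pow_right he (Ideal.pow_mem_pow ha _)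
end

section
/- Let R be a commutative noetherian ring of prime characteristic p and let (M, κ) be a finitely generated R-module with a Cartier structure κ : M → M (additive, κ(r^p m) = r κ(m)). Let I ⊆ R be an ideal. Then the inclusion of the submodule {m ∈ M : I m = 0} into the local cohomology submodule Γ_I(M) = {m ∈ M : I^k m = 0 for some k} is a nil-isomorphism: its cokernel C (with the induced Cartier structure) satisfies that for every c ∈ C there exists e with κ^e(R·c) = 0 in C; more precisely I · κ^e(m) = 0 for every m ∈ Γ_I(M) and e sufficiently large (depending on m). -/
/-! Iterating the Cartier identity gives `κ^[e] (r ^ p ^ e • m) = r • κ^[e] m`. If `I ^ k` kills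
`m` and `a ∈ I`, then for `e ≥ k` we have `p ^ e > k`, so `a ^ p ^ e ∈ I ^ k` kills `m`, whence
`a • κ^[e] m = κ^[e] (a ^ p ^ e • m) = κ^[e] 0 = 0`. -/

theorem iterate_pow_pow_smul {R M : Type*} [Semiring R] [AddCommMonoid M] [Module R M]
    {p : ℕ} (κ : M →+ M) (hκ : ∀ (r : R) (m : M), κ (r ^ p • m) = r • κ m) (e : ℕ) (r : R)
    (m : M) : κ^[e] (r ^ p ^ e • m) = r • κ^[e] m := by
  induction e generalizing m with
  | zero => simp
  | succ e ih =>
    calc κ^[e + 1] (r ^ p ^ (e + 1) • m) = κ^[e] (κ ((r ^ p ^ e) ^ p • m)) := by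
          rw [Function.iterate_succ_apply, pow_succ, pow_mul]
      _ = κ^[e] (r ^ p ^ e • κ m) := by rw [hκ]
      _ = r • κ^[e + 1] m := by rw [ih, Function.iterate_succ_apply]

theorem pow_smul_eq_zero_of_pow_annihilates {R M : Type*} [CommSemiring R] [AddCommMonoid M]
    [Module R M] {I : Ideal R} {k n : ℕ} {m : M} (hm : ∀ b ∈ I ^ k, b • m = 0) (hkn : k ≤ n)
    {a : R} (ha : a ∈ I) : a ^ n • m = 0 :=
  hm _ (Ideal.pow_le_pow_right hkn (Ideal.pow_mem_pow ha n))

theorem torsion_inclusion_nil_isomorphism_general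
    {R M : Type*} [CommRing R]
    [AddCommGroup M] [Module R M]
    (p : ℕ) [Fact p.Prime]
    (κ : M →+ M) (hκ : ∀ (r : R) (m : M), κ (r ^ p • m) = r • κ m)
    (I : Ideal R) :
    ∀ m : M, (∃ k : ℕ, ∀ a ∈ I ^ k, a • m = 0) →
      ∃ e₀ : ℕ, ∀ e ≥ e₀, ∀ a ∈ I, a • (κ^[e] m) = 0 := by
  rintro m ⟨k, hk⟩
  refine ⟨k, fun e he a ha => ?_⟩
  have hk_le : k ≤ p ^ e := he.trans (Nat.lt_pow_self (Fact.out : p.Prime).one_lt).le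
  rw [← iterate_pow_pow_smul κ hκ, pow_smul_eq_zero_of_pow_annihilates hk hk_le ha]
  exact Function.iterate_fixed (map_zero κ) e

/-- Over a noetherian ring `R` of characteristic `p`, for a finitely
generated Cartier module `(M, κ)` and an ideal `I`, the inclusion of the `I`-torsion
submodule `{m : I • m = 0}` into `Γ_I(M) = {m : ∃ k, I^k • m = 0}` is a nil-isomorphism:
for every `m ∈ Γ_I(M)` and all sufficiently large `e` one has `I • κ^[e] m = 0`
(so the cokernel of the inclusion is locally nilpotent). -/
theorem torsion_inclusion_nil_isomorphism
    {R M : Type*} [CommRing R] [IsNoetherianRing R]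
    [AddCommGroup M] [Module R M] [Module.Finite R M]
    (p : ℕ) [Fact p.Prime] [CharP R p]
    (κ : M →+ M) (hκ : ∀ (r : R) (m : M), κ (r ^ p • m) = r • κ m)
    (I : Ideal R) :
    ∀ m : M, (∃ k : ℕ, ∀ a ∈ I ^ k, a • m = 0) →
      ∃ e₀ : ℕ, ∀ e ≥ e₀, ∀ a ∈ I, a • (κ^[e] m) = 0 :=
  torsion_inclusion_nil_isomorphism_general p κ hκ I
end

section
/- Let R be a commutative ring of prime characteristic p and let κ : M → M be a Cartier structure on an R-module M (additive with κ(r^p m) = r κ(m)). Let x₁, …, xₙ ∈ R be arbitrary elements. Then the map λ : M → M defined by λ(m) = κ((x₁ ⋯ xₙ)^{p−1} m) maps the submodule (x₁, …, xₙ)M into itself, and hence induces a well-defined Cartier structure on the quotient M/(x₁, …, xₙ)M. -/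
/-- For a Cartier structure `κ` on an `R`-module `M` (char `p`) and elements
`x₁, …, xₙ ∈ R`, the map `λ(m) = κ((x₁ ⋯ xₙ)^{p−1} • m)` maps the submodule
`(x₁, …, xₙ)M` into itself and hence induces a Cartier structure on `M/(x₁, …, xₙ)M`. -/
theorem cartier_structure_on_complete_intersection_quotient
    {R M : Type*} [CommRing R] [AddCommGroup M] [Module R M]
    (p : ℕ) [Fact p.Prime] [CharP R p]
    (κ : M →+ M) (hκ : ∀ (r : R) (m : M), κ (r ^ p • m) = r • κ m)
    (n : ℕ) (x : Fin n → R)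
    (N : Submodule R M) (hN : N = Ideal.span (Set.range x) • (⊤ : Submodule R M)) :
    (∀ m ∈ N, κ ((∏ i, x i) ^ (p - 1) • m) ∈ N) ∧
    ∃ lam : (M ⧸ N) →+ (M ⧸ N),
      (∀ m : M, lam (Submodule.Quotient.mk m) =
          Submodule.Quotient.mk (κ ((∏ i, x i) ^ (p - 1) • m))) ∧
      (∀ (r : R) (q : M ⧸ N), lam (r ^ p • q) = r • lam q) := by
  have hp : p - 1 + 1 = p := Nat.succ_pred_eq_of_pos (Fact.out : p.Prime).pos
  set c : R := (∏ i, x i) ^ (p - 1) with hc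
  -- key computation
  have key : ∀ r ∈ Ideal.span (Set.range x), ∀ m : M, κ (c • r • m) ∈ N := by
    intro r hr
    induction hr using Submodule.span_induction with
    | mem r hr =>
      obtain ⟨i, rfl⟩ := hr
      intro m
      have hcx : c * x i = x i ^ p * ∏ j ∈ Finset.univ.erase i, x j ^ (p - 1) := by
        rw [hc, ← Finset.prod_pow,
          ← Finset.mul_prod_erase Finset.univ (fun j => x j ^ (p - 1)) (Finset.mem_univ i),
          mul_right_comm, ← pow_succ, hp]
      have : κ (c • x i • m)
          = x i • κ ((∏ j ∈ Finset.univ.erase i, x j ^ (p - 1)) • m) := by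
        rw [smul_smul, hcx, mul_smul, hκ]
      rw [this, hN]
      exact Submodule.smul_mem_smul (Ideal.subset_span ⟨i, rfl⟩) trivial
    | zero => intro m; simp
    | add r s _ _ hr hs =>
      intro m
      have h : c • (r + s) • m = c • r • m + c • s • m := by
        rw [add_smul, smul_add]
      rw [h, map_add]
      exact N.add_mem (hr m) (hs m)
    | smul s r _ hr =>
      intro m
      have h : c • (s • r) • m = c • r • (s • m) := by
        rw [smul_smul, smul_smul, smul_smul, smul_eq_mul, mul_comm s r, mul_assoc]
      rw [h]
      exact hr (s • m)
  have part1 : ∀ m ∈ N, κ (c • m) ∈ N := by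
    intro m hm
    rw [hN] at hm
    refine Submodule.smul_induction_on hm (fun r hr m _ => key r hr m) ?_
    intro m₁ m₂ h₁ h₂
    rw [smul_add, map_add]
    exact N.add_mem h₁ h₂
  refine ⟨part1, ?_⟩
  -- build the induced map on the quotient
  let f : M →+ (M ⧸ N) :=
    (N.mkQ.toAddMonoidHom).comp (κ.comp (DistribMulAction.toAddMonoidHom M c))
  have hf : ∀ a ∈ N.toAddSubgroup, f a = 0 := by
    intro a ha
    simpa [f, Submodule.Quotient.mk_eq_zero] using part1 a ha
  refine ⟨QuotientAddGroup.lift N.toAddSubgroup f hf, fun m => rfl, ?_⟩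
  intro r q
  obtain ⟨m, rfl⟩ := Submodule.Quotient.mk_surjective N q
  have h1 : (r ^ p : R) • (Submodule.Quotient.mk m : M ⧸ N)
      = Submodule.Quotient.mk (r ^ p • m) := rfl
  have h2 : c • (r ^ p) • m = r ^ p • c • m := smul_comm _ _ _
  show Submodule.Quotient.mk (κ (c • (r ^ p) • m))
      = r • Submodule.Quotient.mk (κ (c • m))
  rw [h2, hκ, Submodule.Quotient.mk_smul]
end

section
/- Let R be a commutative ring of prime characteristic p and let N be an R-module with an injective R-linear map φ : N → F^*N, where F^*N = R ⊗_{F, R} N is the Frobenius pullback. Let M := colim_e F^{e*}N be the colimit of the direct system N → F^*N → F^{2*}N → ⋯ whose transition maps are the Frobenius pullbacks F^{e*}φ. Then φ induces an R-linear isomorphism Φ : F^*M → M. -/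
open TensorProduct

universe u

/-- The Frobenius ring endomorphism `r ↦ r^p` of a commutative ring of characteristic `p`. -/
def frobHom (R : Type u) [CommRing R] (p : ℕ) [Fact p.Prime] [CharP R p] : R →+* R where
  toFun r := r ^ p
  map_one' := one_pow p
  map_mul' x y := mul_pow x y p
  map_zero' := zero_pow (Fact.out (p := p.Prime)).ne_zero
  map_add' x y := add_pow_char x y p

/-- `R` viewed as an `R`-algebra via the Frobenius `r ↦ r^p`. -/
def FrobTwist (R : Type u) [CommRing R] (p : ℕ) [Fact p.Prime] [CharP R p] : Type u := R

instance FrobTwist.instCommRing (R : Type u) [CommRing R] (p : ℕ) [Fact p.Prime]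
    [CharP R p] : CommRing (FrobTwist R p) := inferInstanceAs (CommRing R)

instance FrobTwist.instAlgebra (R : Type u) [CommRing R] (p : ℕ) [Fact p.Prime]
    [CharP R p] : Algebra R (FrobTwist R p) := (frobHom R p).toAlgebra

/-- The Frobenius pullback `F^*X = R ⊗_{F,R} X`, the base change of `X` along the
Frobenius of `R`. -/
def FStarT (R : Type u) [CommRing R] (p : ℕ) [Fact p.Prime] [CharP R p]
    (X : Type u) [AddCommGroup X] [Module R X] : Type u :=
  TensorProduct R (FrobTwist R p) X

noncomputable instance FStarT.instAddCommGroup (R : Type u) [CommRing R] (p : ℕ) [Fact p.Prime]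
    [CharP R p] (X : Type u) [AddCommGroup X] [Module R X] :
    AddCommGroup (FStarT R p X) :=
  inferInstanceAs (AddCommGroup (TensorProduct R (FrobTwist R p) X))

/-- The `R`-module structure of `F^*X` (scalars acting through the target factor). -/
noncomputable instance FStarT.instModule (R : Type u) [CommRing R] (p : ℕ) [Fact p.Prime]
    [CharP R p] (X : Type u) [AddCommGroup X] [Module R X] : Module R (FStarT R p X) :=
  inferInstanceAs (Module (FrobTwist R p) (TensorProduct R (FrobTwist R p) X))

/-- Functoriality of the Frobenius pullback. -/
noncomputable def FStarT.map {R : Type u} [CommRing R] (p : ℕ) [Fact p.Prime] [CharP R p]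
    {X Y : Type u} [AddCommGroup X] [Module R X] [AddCommGroup Y] [Module R Y]
    (f : X →ₗ[R] Y) : FStarT R p X →ₗ[R] FStarT R p Y where
  toFun := LinearMap.baseChange (FrobTwist R p) f
  map_add' := (LinearMap.baseChange (FrobTwist R p) f).map_add
  map_smul' r x := (LinearMap.baseChange (FrobTwist R p) f).map_smul r x

/-- A bundled `R`-module. -/
structure ModBundle (R : Type u) [CommRing R] where
  carrier : Type u
  [acg : AddCommGroup carrier]
  [mod : Module R carrier]

attribute [instance] ModBundle.acg ModBundle.mod

/-- The directed system `e ↦ F^{e*}N` of iterated Frobenius pullbacks. -/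
noncomputable def FPullData (R : Type u) [CommRing R] (p : ℕ) [Fact p.Prime] [CharP R p]
    (N : Type u) [AddCommGroup N] [Module R N] : ℕ → ModBundle R := fun e =>
  Nat.rec ⟨N⟩ (fun _ ih => ⟨FStarT R p ih.carrier⟩) e

/-- `F^{e*}N`. -/
noncomputable def FPull (R : Type u) [CommRing R] (p : ℕ) [Fact p.Prime] [CharP R p]
    (N : Type u) [AddCommGroup N] [Module R N] (e : ℕ) : Type u :=
  (FPullData R p N e).carrier

noncomputable instance FPull.instAddCommGroup (R : Type u) [CommRing R] (p : ℕ) [Fact p.Prime]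
    [CharP R p] (N : Type u) [AddCommGroup N] [Module R N] (e : ℕ) :
    AddCommGroup (FPull R p N e) := (FPullData R p N e).acg

noncomputable instance FPull.instModule (R : Type u) [CommRing R] (p : ℕ) [Fact p.Prime]
    [CharP R p] (N : Type u) [AddCommGroup N] [Module R N] (e : ℕ) :
    Module R (FPull R p N e) := (FPullData R p N e).mod

/-- The transition maps `F^{e*}φ : F^{e*}N → F^{(e+1)*}N` of the direct system attached to
a root map `φ : N → F^*N`. -/
noncomputable def FPullMap (R : Type u) [CommRing R] (p : ℕ) [Fact p.Prime] [CharP R p]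
    (N : Type u) [AddCommGroup N] [Module R N] (φ : N →ₗ[R] FStarT R p N) :
    ∀ e : ℕ, FPull R p N e →ₗ[R] FPull R p N (e + 1) := fun e =>
  Nat.rec (motive := fun e => FPull R p N e →ₗ[R] FPull R p N (e + 1)) φ
    (fun _ ih => FStarT.map p ih) e

/-- The composite transition maps of the direct system. -/
noncomputable def FPullChain (R : Type u) [CommRing R] (p : ℕ) [Fact p.Prime] [CharP R p]
    (N : Type u) [AddCommGroup N] [Module R N] (φ : N →ₗ[R] FStarT R p N) :
    ∀ i j : ℕ, i ≤ j → (FPull R p N i →ₗ[R] FPull R p N j) := fun _ _ h =>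
  Nat.leRecOn h (fun {k} g => (FPullMap R p N φ k).comp g) LinearMap.id

/-!
`Φ : F^*M → M` is the adjoint, under `F^* ⊣ F_*`, of `M → F_*M`, `[x]ₑ ↦ [1 ⊗ x]ₑ₊₁`, so that
`Φ (a ⊗ [x]ₑ) = [a ⊗ x]ₑ₊₁`. In the other direction, `[x]ₑ ↦ F^*(ιₑ) (φₑ x)` is compatible with
the system by functoriality of `F^*`. Both composites are the identity because `[φₑ x]ₑ₊₁ = [x]ₑ`
in `M`: the system `e ↦ F^*(F^{e*}N) = F^{(e+1)*}N` is the original one shifted by one step.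
-/

section FrobeniusFunctors

variable {R : Type u} [CommRing R] (p : ℕ) [Fact p.Prime] [CharP R p]

/-- The Frobenius pushforward `F_*Y`: `R` acts on `Y` through the Frobenius, while
`FrobTwist R p` acts as `R` does on `Y`. -/
def FrobPush (R : Type u) [CommRing R] (p : ℕ) [Fact p.Prime] [CharP R p]
    (Y : Type u) : Type u := Y

variable {X Y Z : Type u} [AddCommGroup X] [Module R X] [AddCommGroup Y] [Module R Y]
  [AddCommGroup Z] [Module R Z]

instance FrobPush.instAddCommGroup : AddCommGroup (FrobPush R p Y) :=
  inferInstanceAs (AddCommGroup Y)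

instance FrobPush.instModuleTwist : Module (FrobTwist R p) (FrobPush R p Y) :=
  inferInstanceAs (Module R Y)

noncomputable instance FrobPush.instModule : Module R (FrobPush R p Y) :=
  Module.compHom Y (frobHom R p)

instance FrobPush.instIsScalarTower : IsScalarTower R (FrobTwist R p) (FrobPush R p Y) where
  smul_assoc _ _ _ := mul_smul (α := R) _ _ (_ : Y)

def FrobPush.map (f : Y →ₗ[R] Z) : FrobPush R p Y →ₗ[R] FrobPush R p Z where
  toFun := f
  map_add' := f.map_add
  map_smul' r := f.map_smul (frobHom R p r)

/-- The unit `x ↦ 1 ⊗ x` of the adjunction `F^* ⊣ F_*`. -/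
noncomputable def FStarT.unit : X →ₗ[R] FrobPush R p (FStarT R p X) where
  toFun x := (1 : FrobTwist R p) ⊗ₜ[R] x
  map_add' := tmul_add 1
  map_smul' r x := (smul_tmul r (1 : FrobTwist R p) x).symm

noncomputable def FStarT.liftPush (l : X →ₗ[R] FrobPush R p Y) : FStarT R p X →ₗ[R] Y where
  toFun := l.liftBaseChange (FrobTwist R p)
  map_add' := map_add _
  map_smul' := map_smul (l.liftBaseChange (FrobTwist R p))

lemma FStarT.map_map (g : Y →ₗ[R] Z) (f : X →ₗ[R] Y) (t : FStarT R p X) :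
    FStarT.map p g (FStarT.map p f t) = FStarT.map p (g ∘ₗ f) t :=
  (LinearMap.congr_fun (LinearMap.baseChange_comp (A := FrobTwist R p) f g) t).symm

lemma FStarT.liftPush_tmul (l : X →ₗ[R] FrobPush R p Y) (a : FrobTwist R p) (x : X) :
    (FStarT.liftPush p l (a ⊗ₜ[R] x) : FrobPush R p Y) = a • l x := rfl

lemma FStarT.smul_unit (a : FrobTwist R p) (x : X) :
    a • FStarT.unit p x = (a ⊗ₜ[R] x : FStarT R p X) := by
  show a • ((1 : FrobTwist R p) ⊗ₜ[R] x) = a ⊗ₜ[R] x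
  rw [smul_tmul', smul_eq_mul, mul_one]

lemma FStarT.linearMap_ext {g h : FStarT R p X →ₗ[R] Y}
    (H : ∀ a x, g (a ⊗ₜ[R] x) = h (a ⊗ₜ[R] x)) : g = h := by
  refine LinearMap.ext fun t => TensorProduct.induction_on t ?_ H fun t t' ht ht' => ?_
  · exact (map_zero g).trans (map_zero h).symm
  · exact ((map_add g t t').trans (congrArg₂ (· + ·) ht ht')).trans (map_add h t t').symm

end FrobeniusFunctors

section RootColimit

variable {R N : Type u} [CommRing R] [AddCommGroup N] [Module R N]
  (p : ℕ) [Fact p.Prime] [CharP R p] (φ : N →ₗ[R] FStarT R p N)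

local notation "M" => Module.DirectLimit (FPull R p N) (FPullChain R p N φ)

local notation "ι" => Module.DirectLimit.of R ℕ (FPull R p N) (FPullChain R p N φ)

lemma FPullChain_self (i : ℕ) : FPullChain R p N φ i i le_rfl = LinearMap.id :=
  Nat.leRecOn_self _

lemma FPullChain_succ (i j : ℕ) (h : i ≤ j) :
    FPullChain R p N φ i (j + 1) (h.trans j.le_succ) =
      FPullMap R p N φ j ∘ₗ FPullChain R p N φ i j h :=
  Nat.leRecOn_succ h _

lemma FPullChain_compatible {P : Type u} [AddCommGroup P] [Module R P]
    (g : ∀ e, FPull R p N e →ₗ[R] P) (hg : ∀ e x, g (e + 1) (FPullMap R p N φ e x) = g e x)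
    (i j : ℕ) (hij : i ≤ j) (x : FPull R p N i) : g j (FPullChain R p N φ i j hij x) = g i x := by
  induction j, hij using Nat.le_induction with
  | base => rw [FPullChain_self, LinearMap.id_apply]
  | succ j hij ih => rw [FPullChain_succ p φ i j hij, LinearMap.comp_apply, hg, ih]

lemma of_FPullMap (e : ℕ) (x : FPull R p N e) : ι (e + 1) (FPullMap R p N φ e x) = ι e x := by
  rw [← Module.DirectLimit.of_f (hij := e.le_succ), FPullChain_succ p φ e e le_rfl,
    FPullChain_self]
  rfl

noncomputable def rootColimitPhi : FStarT R p M →ₗ[R] M :=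
  FStarT.liftPush p <| Module.DirectLimit.lift R ℕ (FPull R p N) (FPullChain R p N φ)
    (fun e => FrobPush.map p (ι (e + 1)) ∘ₗ FStarT.unit p)
    (FPullChain_compatible p φ _ fun e x => of_FPullMap p φ (e + 1) (1 ⊗ₜ[R] x))

lemma rootColimitPhi_tmul_of (e : ℕ) (a : FrobTwist R p) (x : FPull R p N e) :
    rootColimitPhi p φ (a ⊗ₜ[R] ι e x) = ι (e + 1) (a ⊗ₜ[R] x) := by
  have h : (rootColimitPhi p φ (a ⊗ₜ[R] ι e x) : FrobPush R p M) =
      a • FrobPush.map p (ι (e + 1)) (FStarT.unit p x) := by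
    rw [rootColimitPhi, FStarT.liftPush_tmul, Module.DirectLimit.lift_of]
    rfl
  exact h.trans (((ι (e + 1)).map_smul a _).symm.trans
    (congrArg (ι (e + 1)) (FStarT.smul_unit p a x)))

lemma rootColimitPhi_comp_map_of (e : ℕ) :
    rootColimitPhi p φ ∘ₗ FStarT.map p (ι e) = ι (e + 1) :=
  FStarT.linearMap_ext p (rootColimitPhi_tmul_of p φ e)

noncomputable def rootColimitPhiInv : M →ₗ[R] FStarT R p M :=
  Module.DirectLimit.lift R ℕ (FPull R p N) (FPullChain R p N φ)
    (fun e => FStarT.map p (ι e) ∘ₗ FPullMap R p N φ e)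
    (FPullChain_compatible p φ _ fun e x =>
      (FStarT.map_map p _ _ _).trans
        (congrArg (FStarT.map p · (FPullMap R p N φ e x)) (LinearMap.ext (of_FPullMap p φ e))))

lemma rootColimitPhiInv_of (e : ℕ) (x : FPull R p N e) :
    rootColimitPhiInv p φ (ι e x) = FStarT.map p (ι e) (FPullMap R p N φ e x) :=
  Module.DirectLimit.lift_of ..

lemma rootColimitPhi_comp_phiInv :
    rootColimitPhi p φ ∘ₗ rootColimitPhiInv p φ = LinearMap.id :=
  Module.DirectLimit.hom_ext fun e => LinearMap.ext fun x =>
    calc rootColimitPhi p φ (rootColimitPhiInv p φ (ι e x))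
        = rootColimitPhi p φ (FStarT.map p (ι e) (FPullMap R p N φ e x)) := by
          rw [rootColimitPhiInv_of]
      _ = ι (e + 1) (FPullMap R p N φ e x) :=
          LinearMap.congr_fun (rootColimitPhi_comp_map_of p φ e) _
      _ = ι e x := of_FPullMap p φ e x

lemma rootColimitPhiInv_comp_phi :
    rootColimitPhiInv p φ ∘ₗ rootColimitPhi p φ = LinearMap.id :=
  FStarT.linearMap_ext p fun a m => by
    induction m using Module.DirectLimit.induction_on with
    | ih e x =>
      -- `FPullMap (e + 1) (a ⊗ x) = a ⊗ FPullMap e x` holds definitionally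
      have hΦ := congrArg (rootColimitPhiInv p φ) (rootColimitPhi_tmul_of p φ e a x)
      exact (hΦ.trans (rootColimitPhiInv_of p φ (e + 1) _)).trans
        (congrArg (a ⊗ₜ[R] ·) (of_FPullMap p φ e x))

end RootColimit

theorem root_colimit_unit_isomorphism_general
    {R N : Type u} [CommRing R] [AddCommGroup N] [Module R N]
    (p : ℕ) [Fact p.Prime] [CharP R p]
    (φ : N →ₗ[R] FStarT R p N) :
    ∃ Φ : FStarT R p (Module.DirectLimit (FPull R p N) (FPullChain R p N φ)) ≃ₗ[R]
        Module.DirectLimit (FPull R p N) (FPullChain R p N φ),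
      ∀ (e : ℕ) (a : FrobTwist R p) (x : FPull R p N e),
        Φ (a ⊗ₜ[R] (Module.DirectLimit.of R ℕ (FPull R p N) (FPullChain R p N φ) e x)) =
          Module.DirectLimit.of R ℕ (FPull R p N) (FPullChain R p N φ) (e + 1)
            ((a ⊗ₜ[R] x : FStarT R p (FPull R p N e))) :=
  ⟨.ofLinearMap (rootColimitPhi p φ) (rootColimitPhiInv p φ) (rootColimitPhi_comp_phiInv p φ)
    (rootColimitPhiInv_comp_phi p φ), rootColimitPhi_tmul_of p φ⟩

/-- Let `R` have characteristic `p` and let `N` be an `R`-module with an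
injective map `φ : N → F^*N` into its Frobenius pullback.  Let `M = colim_e F^{e*}N` be the
colimit of the direct system with transition maps the Frobenius pullbacks of `φ`.  Then `φ`
induces an `R`-linear isomorphism `Φ : F^*M ≅ M`, sending `a ⊗ [x]_e ↦ [a ⊗ x]_{e+1}`. -/
theorem root_colimit_unit_isomorphism
    {R N : Type u} [CommRing R] [AddCommGroup N] [Module R N]
    (p : ℕ) [Fact p.Prime] [CharP R p]
    (φ : N →ₗ[R] FStarT R p N) (hφ : Function.Injective φ) :
    ∃ Φ : FStarT R p (Module.DirectLimit (FPull R p N) (FPullChain R p N φ)) ≃ₗ[R]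
        Module.DirectLimit (FPull R p N) (FPullChain R p N φ),
      ∀ (e : ℕ) (a : FrobTwist R p) (x : FPull R p N e),
        Φ (a ⊗ₜ[R] (Module.DirectLimit.of R ℕ (FPull R p N) (FPullChain R p N φ) e x)) =
          Module.DirectLimit.of R ℕ (FPull R p N) (FPullChain R p N φ) (e + 1)
            ((a ⊗ₜ[R] x : FStarT R p (FPull R p N e))) :=
  root_colimit_unit_isomorphism_general p φ
end

section
/- Let R be a commutative ring of prime characteristic p and let κ : M → M be a Cartier structure on an R-module M. On N := M ⊗_R R[x] (thought of as sections of the twisted inverse image along A¹_R → Spec R), define C : N → N by C(m ⊗ x^n) = κ(m) ⊗ x^{(n+1)/p − 1} if p divides n+1, and C(m ⊗ x^n) = 0 otherwise, extended p^{-1}-linearly. Then C is a well-defined additive map with C(g^p ξ) = g C(ξ) for all g ∈ R[x] and ξ ∈ N, i.e. C is a Cartier structure on M ⊗_R R[x]. -/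
open TensorProduct Polynomial

/-- `Polynomial R ≃ₗ[R] (ℕ →₀ R)`. -/
noncomputable def polyFinsuppLEquiv (R : Type*) [CommRing R] : Polynomial R ≃ₗ[R] (ℕ →₀ R) :=
  { toFun := fun f => f.toFinsupp.coeff
    invFun := fun g => ⟨AddMonoidAlgebra.ofCoeff g⟩
    left_inv := fun f => by cases f; rfl
    right_inv := fun g => rfl
    map_add' := fun f g => by rw [Polynomial.toFinsupp_add]; rfl
    map_smul' := fun r f => by rw [Polynomial.toFinsupp_smul]; rfl }

@[simp] lemma polyFinsuppLEquiv_apply {R : Type*} [CommRing R] (f : Polynomial R) :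
    polyFinsuppLEquiv R f = f.toFinsupp.coeff := rfl

/-- Let `κ` be a Cartier structure on an `R`-module `M`, `char R = p`.
On `R[x] ⊗_R M` (the twisted inverse image along `𝔸¹_R → Spec R`) there is a well-defined
additive map `C` given on monomials by
`C (r·x^n ⊗ m) = x^{(n+1)/p − 1} ⊗ κ (r • m)` if `p ∣ n + 1` and `0` otherwise,
and `C` is `p⁻¹`-semilinear over `R[x]`: `C (g^p • ξ) = g • C ξ`, i.e. `C` is a Cartier
structure on `M ⊗_R R[x]`. -/
theorem cartier_structure_on_affine_line_pullback
    {R M : Type*} [CommRing R] [AddCommGroup M] [Module R M]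
    (p : ℕ) [Fact p.Prime] [CharP R p]
    (κ : M →+ M) (hκ : ∀ (r : R) (m : M), κ (r ^ p • m) = r • κ m) :
    ∃ C : (Polynomial R ⊗[R] M) →+ (Polynomial R ⊗[R] M),
      (∀ (r : R) (n : ℕ) (m : M),
        C ((Polynomial.C r * X ^ n) ⊗ₜ[R] m) =
          if p ∣ (n + 1) then (X ^ ((n + 1) / p - 1) : Polynomial R) ⊗ₜ[R] κ (r • m) else 0) ∧
      (∀ (g : Polynomial R) (ξ : Polynomial R ⊗[R] M), C (g ^ p • ξ) = g • C ξ) := by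
  have hp : 0 < p := (Fact.out : p.Prime).pos
  have hf : Function.Injective (fun k : ℕ => p * k + (p - 1)) := by
    intro a b h
    simp only [add_left_inj] at h
    exact Nat.eq_of_mul_eq_mul_left hp h
  let e : (Polynomial R ⊗[R] M) ≃ₗ[R] (ℕ →₀ M) :=
    (TensorProduct.congr (polyFinsuppLEquiv R) (LinearEquiv.refl R M)).trans
      (TensorProduct.finsuppScalarLeft R M ℕ)
  let D : (ℕ →₀ M) →+ (ℕ →₀ M) :=
    (Finsupp.mapRange.addMonoidHom κ).comp (Finsupp.comapDomain.addMonoidHom hf)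
  let C : (Polynomial R ⊗[R] M) →+ (Polynomial R ⊗[R] M) :=
    (e.symm.toAddMonoidHom.comp D).comp e.toAddMonoidHom
  -- the equivalence on monomial tensors
  have hE : ∀ (r : R) (n : ℕ) (m : M),
      e ((Polynomial.C r * X ^ n) ⊗ₜ[R] m) = Finsupp.single n (r • m) := by
    intro r n m
    simp only [e, LinearEquiv.trans_apply, TensorProduct.congr_tmul, LinearEquiv.refl_apply,
      polyFinsuppLEquiv_apply, Polynomial.toFinsupp_C_mul_X_pow,
      AddMonoidAlgebra.coeff_single]
    ext i
    rw [TensorProduct.finsuppScalarLeft_apply_tmul_apply]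
    simp [Finsupp.single_apply, ite_smul]
  -- key computation on monomials
  have h1 : ∀ (r : R) (n : ℕ) (m : M),
      C ((Polynomial.C r * X ^ n) ⊗ₜ[R] m) =
        if p ∣ (n + 1) then (X ^ ((n + 1) / p - 1) : Polynomial R) ⊗ₜ[R] κ (r • m) else 0 := by
    intro r n m
    show e.symm (D (e _)) = _
    rw [hE]
    by_cases hdvd : p ∣ n + 1
    · obtain ⟨t, ht⟩ := hdvd
      have ht1 : 1 ≤ t := Nat.one_le_iff_ne_zero.mpr (by rintro rfl; simp at ht)
      have hmul : p * (t - 1) + p = p * t := by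
        rw [← Nat.mul_succ]; congr 1; omega
      have hn : n = p * (t - 1) + (p - 1) := by omega
      have hD : D (Finsupp.single n (r • m)) = Finsupp.single (t - 1) (κ (r • m)) := by
        simp only [D, AddMonoidHom.comp_apply, Finsupp.comapDomain.addMonoidHom_apply,
          Finsupp.mapRange.addMonoidHom_apply]
        rw [hn, show p * (t - 1) + (p - 1) = (fun k : ℕ => p * k + (p - 1)) (t - 1) from rfl,
          Finsupp.comapDomain_single]
        exact Finsupp.mapRange_single
      have hdiv : (n + 1) / p = t := by rw [ht, Nat.mul_div_cancel_left t hp]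
      rw [hD, if_pos ⟨t, ht⟩, hdiv]
      apply e.injective
      rw [e.apply_symm_apply]
      have : (X ^ (t - 1) : Polynomial R) = Polynomial.C (1 : R) * X ^ (t - 1) := by
        rw [map_one, one_mul]
      rw [this, hE, one_smul]
    · have hD : D (Finsupp.single n (r • m)) = 0 := by
        simp only [D, AddMonoidHom.comp_apply, Finsupp.comapDomain.addMonoidHom_apply,
          Finsupp.mapRange.addMonoidHom_apply]
        have h0 : Finsupp.comapDomain (fun k : ℕ => p * k + (p - 1)) (Finsupp.single n (r • m))
            hf.injOn = 0 := by
          ext k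
          rw [Finsupp.comapDomain_apply, Finsupp.single_apply_eq_zero.mpr, Finsupp.coe_zero,
            Pi.zero_apply]
          intro h
          exfalso
          apply hdvd
          refine ⟨k + 1, ?_⟩
          rw [Nat.mul_add, Nat.mul_one]
          omega
        rw [h0]
        simp
      rw [hD, if_neg hdvd, map_zero]
  refine ⟨C, h1, ?_⟩
  -- semilinearity
  have key : ∀ (h g : Polynomial R) (m : M), h • (g ⊗ₜ[R] m) = (h * g) ⊗ₜ[R] m := by
    intro h g m
    rw [TensorProduct.smul_tmul', smul_eq_mul]
  intro g
  induction g using Polynomial.induction_on' with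
  | add f g hf' hg' =>
    intro ξ
    rw [add_pow_char, add_smul, map_add, hf', hg', ← add_smul]
  | monomial j a =>
    intro ξ
    induction ξ using TensorProduct.induction_on with
    | zero => simp
    | add x y hx hy => rw [smul_add, map_add, hx, hy, map_add, smul_add]
    | tmul f m =>
      induction f using Polynomial.induction_on' with
      | add u v hu hv =>
        rw [TensorProduct.add_tmul, smul_add, map_add, hu, hv, map_add, smul_add]
      | monomial n b =>
        rw [← Polynomial.C_mul_X_pow_eq_monomial, ← Polynomial.C_mul_X_pow_eq_monomial]
        have hpow : (Polynomial.C a * X ^ j : Polynomial R) ^ p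
            = Polynomial.C (a ^ p) * X ^ (p * j) := by
          rw [mul_pow, ← map_pow, ← pow_mul, mul_comm j p]
        rw [hpow, key, show (Polynomial.C (a ^ p) * X ^ (p * j)) * (Polynomial.C b * X ^ n)
            = Polynomial.C (a ^ p * b) * X ^ (p * j + n) by rw [map_mul, pow_add]; ring]
        rw [h1, h1]
        by_cases hdvd : p ∣ n + 1
        · obtain ⟨t, ht⟩ := hdvd
          have ht1 : 1 ≤ t := Nat.one_le_iff_ne_zero.mpr (by rintro rfl; simp at ht)
          have hsum : p * j + n + 1 = p * (j + t) := by rw [Nat.mul_add]; omega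
          have hdvd2 : p ∣ p * j + n + 1 := ⟨j + t, hsum⟩
          have hdvdn : p ∣ n + 1 := ⟨t, ht⟩
          have hdiv1 : (n + 1) / p = t := by rw [ht, Nat.mul_div_cancel_left t hp]
          have hdiv2 : (p * j + n + 1) / p = j + t := by
            rw [hsum, Nat.mul_div_cancel_left _ hp]
          rw [if_pos hdvdn, if_pos hdvd2, hdiv1, hdiv2]
          rw [mul_smul, hκ]
          rw [key]
          rw [TensorProduct.tmul_smul, TensorProduct.smul_tmul', Polynomial.smul_eq_C_mul]
          congr 1
          rw [mul_assoc, ← pow_add, show j + (t - 1) = j + t - 1 by omega]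
        · have hdvd2 : ¬ p ∣ p * j + n + 1 := by
            intro hc
            apply hdvd
            obtain ⟨s, hs⟩ := hc
            have hsj : j ≤ s := Nat.le_of_mul_le_mul_left (by omega) hp
            have hmm : p * (s - j) + p * j = p * s := by
              rw [← Nat.mul_add]; congr 1; omega
            exact ⟨s - j, by omega⟩
          rw [if_neg hdvd, if_neg hdvd2, smul_zero]
end

section
/- Let R be a commutative ring of prime characteristic p, let M be an R[x₁,…,xₙ]-Cartier module with structure κ over the polynomial ring T = R[x₁,…,xₙ], let I = (x_{m+1},…,xₙ) ⊆ T, and let S be a flat T-algebra. Suppose the Cartier structure on M ⊗_T S is given on elementary tensors by m ⊗ s^p ↦ κ(m) ⊗ s. Then the natural isomorphism of S/IS-modules (M ⊗_T S) ⊗_S S/IS ≅ (M/IM) ⊗_{T/I} S/IS intertwines the Cartier structure m ⊗ s'^p ↦ κ(x_{m+1}^{p−1}⋯xₙ^{p−1} m) ⊗ s' on the left (induced from the complete intersection quotient of the base-changed module) with the base change of the Cartier structure m̄ ↦ κ(x_{m+1}^{p−1}⋯xₙ^{p−1} m) on M/IM on the right. -/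
open TensorProduct

/-- For an ideal `I` and modules `M`, `S`, the image of `(I • ⊤ : Submodule T M)` in the
tensor product `M ⊗[T] S` equals `I • ⊤` there. -/
lemma range_map_subtype_smul_top {T M S : Type*} [CommRing T]
    [AddCommGroup M] [Module T M] [AddCommGroup S] [Module T S] (I : Ideal T) :
    LinearMap.range (TensorProduct.map (I • (⊤ : Submodule T M)).subtype
      (LinearMap.id : S →ₗ[T] S)) = I • (⊤ : Submodule T (M ⊗[T] S)) := by
  apply le_antisymm
  · rintro _ ⟨ξ, rfl⟩
    induction ξ using TensorProduct.induction_on with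
    | zero => simp
    | tmul m s =>
      obtain ⟨m, hm⟩ := m
      simp only [TensorProduct.map_tmul, Submodule.coe_subtype, LinearMap.id_coe, id_eq]
      refine Submodule.smul_induction_on hm (fun r hr n _ => ?_) (fun a b ha hb => ?_)
      · rw [← TensorProduct.smul_tmul']
        exact Submodule.smul_mem_smul hr trivial
      · rw [TensorProduct.add_tmul]; exact Submodule.add_mem _ ha hb
    | add a b ha hb => rw [map_add]; exact Submodule.add_mem _ ha hb
  · rw [Submodule.smul_le]
    intro r hr ξ _
    induction ξ using TensorProduct.induction_on with
    | zero => simp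
    | tmul m s =>
      rw [TensorProduct.smul_tmul']
      exact ⟨(⟨r • m, Submodule.smul_mem_smul hr trivial⟩ : (I • ⊤ : Submodule T M)) ⊗ₜ[T] s,
        rfl⟩
    | add a b ha hb => rw [smul_add]; exact Submodule.add_mem _ (ha trivial) (hb trivial)

/-- Let `T` be a ring of characteristic `p`, `(M, κ)` a Cartier module over
`T`, `I = (x₁, …, x_k) ⊆ T` generated by a finite family, and `S` a flat `T`-algebra.
Suppose the Cartier structure `λ_S` on `M ⊗_T S` is given on elementary tensors by
`m ⊗ s^p ↦ κ m ⊗ s`.  Then the natural isomorphism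
`(M ⊗_T S)/I(M ⊗_T S) ≅ (M/IM) ⊗ S` intertwines the Cartier structure induced from the
complete intersection quotient of the base-changed module (given by
`ξ ↦ λ_S((x₁⋯x_k)^{p−1} • ξ)`) with the base change of the Cartier structure
`m̄ ↦ κ((x₁⋯x_k)^{p−1} m)` on `M/IM`. -/
theorem cartier_base_change_complete_intersection_compatible
    {T S M : Type*} [CommRing T] [CommRing S] [Algebra T S] [Module.Flat T S]
    (p : ℕ) [Fact p.Prime] [CharP T p] [CharP S p]
    [AddCommGroup M] [Module T M]
    (κ : M →+ M) (hκ : ∀ (t : T) (m : M), κ (t ^ p • m) = t • κ m)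
    {k : ℕ} (x : Fin k → T)
    (lamS : (M ⊗[T] S) →+ (M ⊗[T] S))
    (hlamS : ∀ (t : T) (ξ : M ⊗[T] S), lamS (t ^ p • ξ) = t • lamS ξ)
    (hlam : ∀ (m : M) (s : S), lamS (m ⊗ₜ[T] (s ^ p)) = (κ m) ⊗ₜ[T] s) :
    ∃ e : ((M ⊗[T] S) ⧸ ((Ideal.span (Set.range x)) • (⊤ : Submodule T (M ⊗[T] S)))) ≃ₗ[T]
          ((M ⧸ ((Ideal.span (Set.range x)) • (⊤ : Submodule T M))) ⊗[T] S),
      (∀ (m : M) (s : S),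
        e (Submodule.Quotient.mk (m ⊗ₜ[T] s)) = (Submodule.Quotient.mk m) ⊗ₜ[T] s) ∧
      (∀ (m : M) (s : S),
        e (Submodule.Quotient.mk (lamS (((∏ i, x i) ^ (p - 1)) • (m ⊗ₜ[T] (s ^ p))))) =
          (Submodule.Quotient.mk (κ ((∏ i, x i) ^ (p - 1) • m))) ⊗ₜ[T] s) := by
  set I := Ideal.span (Set.range x) with hI
  refine ⟨(Submodule.Quotient.equiv _ _ (LinearEquiv.refl T (M ⊗[T] S)) (by
      have h1 : Submodule.map (LinearEquiv.refl T (M ⊗[T] S) : M ⊗[T] S →ₗ[T] M ⊗[T] S)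
          (I • (⊤ : Submodule T (M ⊗[T] S))) = I • ⊤ := by
        ext ξ; simp
      rw [h1]
      exact (range_map_subtype_smul_top I).symm)) ≪≫ₗ
    (TensorProduct.quotientTensorEquiv S (I • (⊤ : Submodule T M))).symm, ?_, ?_⟩
  · intro m s
    rfl
  · intro m s
    rw [TensorProduct.smul_tmul', hlam]
    rfl
end
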